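/- Let p, k ∈ ℂ and let I ⊆ F be the two-sided ideal generated by the six elements x₂x₁ + x₁x₂, x₃x₁ + x₁x₃, x₃x₂ + x₂x₃ + p x₁x₂, x₁², x₂², and x₃² + k x₁x₂ + p x₁x₃. Then the quotient algebra F/I has ℂ-dimension 8, and the images of the eight monomials x₁^{e₁} x₂^{e₂} x₃^{e₃} with e₁, e₂, e₃ ∈ {0, 1} form a ℂ-basis of F/I. (This quotient is the Nichols algebra associated to the braiding of type R_{1,2} with t = −1, b = −p, a = −p².) -/

import Mathlib

/-- The free associative unital `ℂ`-algebra on three generators. -/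
abbrev F : Type := FreeAlgebra ℂ (Fin 3)

/-- The generators `x₁ = X 0`, `x₂ = X 1`, `x₃ = X 2`. -/
noncomputable def X (i : Fin 3) : F := FreeAlgebra.ι ℂ i

/-- Generators: `x₂x₁ + x₁x₂`, `x₃x₁ + x₁x₃`, `x₃x₂ + x₂x₃ + p x₁x₂`, `x₁²`, `x₂²`, `x₃² + k x₁x₂ + p x₁x₃`. -/
noncomputable def S (p k : ℂ) : Set F :=
  {X 1 * X 0 + X 0 * X 1,
   X 2 * X 0 + X 0 * X 2,
   X 2 * X 1 + X 1 * X 2 + p • (X 0 * X 1),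
   X 0 * X 0,
   X 1 * X 1,
   X 2 * X 2 + k • (X 0 * X 1) + p • (X 0 * X 2)}

/-- The relation whose two-sided-ideal closure is the ideal generated by `S`;
`RingQuot rel` is the quotient `F/I`. -/
def rel (p k : ℂ) : F → F → Prop := fun x y => x ∈ S p k ∧ y = 0

/-!
Read as rewrite rules, the relations move each `x₁` to the left of `x₂` and `x₃`, move each `x₂`
to the left of `x₃`, and replace `x₁², x₂², x₃²` by `0, 0, -k x₁x₂ - p x₁x₃`; hence the eight
ordered monomials `x₁^a x₂^b x₃^c`, `a, b, c ≤ 1`, span `F/I`. For independence, `F/I` acts on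
`ℂ⁸` by left multiplication written in the coordinates of these monomials, and the monomials send
the basis vector of index `(0, 0, 0)` to the eight distinct basis vectors.
-/

open Submodule

def orderedMonomial {A : Type*} [Monoid A] (y : Fin 3 → A) (e : Fin 2 × Fin 2 × Fin 2) : A :=
  y 0 ^ (e.1 : ℕ) * y 1 ^ (e.2.1 : ℕ) * y 2 ^ (e.2.2 : ℕ)

lemma FreeAlgebra.eq_top_of_one_mem_of_mul_mem {R σ A : Type*} [CommSemiring R] [Semiring A]
    [Algebra R A] (f : FreeAlgebra R σ →ₐ[R] A) (hf : Function.Surjective f)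
    (W : Submodule R A) (h1 : 1 ∈ W) (hW : ∀ i, ∀ w ∈ W, f (ι R i) * w ∈ W) : W = ⊤ := by
  have hmul : ∀ z, ∀ w ∈ W, f z * w ∈ W := by
    intro z
    induction z using FreeAlgebra.induction with
    | grade0 r => intro w hw; simpa [Algebra.smul_def] using W.smul_mem r hw
    | grade1 i => exact hW i
    | mul a b ha hb => intro w hw; simpa [mul_assoc] using ha _ (hb w hw)
    | add a b ha hb => intro w hw; simpa [add_mul] using W.add_mem (ha w hw) (hb w hw)
  refine eq_top_iff'.2 fun a => ?_
  obtain ⟨z, rfl⟩ := hf a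
  simpa using hmul z 1 h1

lemma mul_orderedMonomial_mem_span {R A : Type*} [CommRing R] [Ring A] [Algebra R A] {p k : R}
    {x y z : A} (r10 : y * x + x * y = 0) (r20 : z * x + x * z = 0)
    (r21 : z * y + y * z + p • (x * y) = 0) (r00 : x * x = 0) (r11 : y * y = 0)
    (r22 : z * z + k • (x * y) + p • (x * z) = 0) {w : A} (hw : w = x ∨ w = y ∨ w = z)
    (e : Fin 2 × Fin 2 × Fin 2) :
    w * orderedMonomial ![x, y, z] e ∈ span R (Set.range (orderedMonomial ![x, y, z])) := by
  have mem : ∀ e, orderedMonomial ![x, y, z] e ∈ span R (Set.range (orderedMonomial ![x, y, z])) :=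
    fun e => subset_span ⟨e, rfl⟩
  generalize span R (Set.range (orderedMonomial ![x, y, z])) = W at mem ⊢
  have m1 : 1 ∈ W := by simpa [orderedMonomial] using mem (0, 0, 0)
  have mx : x ∈ W := by simpa [orderedMonomial] using mem (1, 0, 0)
  have my : y ∈ W := by simpa [orderedMonomial] using mem (0, 1, 0)
  have mz : z ∈ W := by simpa [orderedMonomial] using mem (0, 0, 1)
  have mxy : x * y ∈ W := by simpa [orderedMonomial] using mem (1, 1, 0)
  have mxz : x * z ∈ W := by simpa [orderedMonomial] using mem (1, 0, 1)
  have myz : y * z ∈ W := by simpa [orderedMonomial] using mem (0, 1, 1)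
  have mxyz : x * (y * z) ∈ W := by simpa [orderedMonomial, mul_assoc] using mem (1, 1, 1)
  have yx : y * x = -(x * y) := eq_neg_of_add_eq_zero_left r10
  have zx : z * x = -(x * z) := eq_neg_of_add_eq_zero_left r20
  have zy : z * y = -(y * z + p • (x * y)) :=
    eq_neg_of_add_eq_zero_left ((add_assoc _ _ _).symm.trans r21)
  have zz : z * z = -(k • (x * y) + p • (x * z)) :=
    eq_neg_of_add_eq_zero_left ((add_assoc _ _ _).symm.trans r22)
  have xx' : ∀ t, x * (x * t) = 0 := fun t => by rw [← mul_assoc, r00, zero_mul]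
  have yy' : ∀ t, y * (y * t) = 0 := fun t => by rw [← mul_assoc, r11, zero_mul]
  have yx' : ∀ t, y * (x * t) = -(x * y) * t := fun t => by rw [← mul_assoc, yx]
  have zx' : ∀ t, z * (x * t) = -(x * z) * t := fun t => by rw [← mul_assoc, zx]
  have zy' : ∀ t, z * (y * t) = -(y * z + p • (x * y)) * t := fun t => by rw [← mul_assoc, zy]
  obtain ⟨a, b, c⟩ := e
  rcases hw with hw | hw | hw <;> subst w <;> fin_cases a <;> fin_cases b <;> fin_cases c <;>
    simp only [orderedMonomial, Matrix.cons_val_zero, Matrix.cons_val_one, Matrix.cons_val_two,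
      Matrix.tail_cons, Matrix.head_cons,
      pow_zero, pow_one, one_mul, mul_one, r00, r11, yx, zx, zy, zz, xx', yy', yx', zx', zy',
      mul_assoc, neg_mul, add_mul, smul_mul_assoc, mul_neg, mul_add, mul_smul_comm, mul_zero,
      neg_zero, smul_zero, add_zero] <;>
    apply_rules [W.add_mem, W.neg_mem, W.smul_mem, W.zero_mem, m1, mx, my, mz, mxy, mxz, myz, mxyz]

lemma span_orderedMonomial_eq_top {A : Type*} [Ring A] [Algebra ℂ A] {p k : ℂ}
    (f : F →ₐ[ℂ] A) (hf_surj : Function.Surjective f) (hf : ∀ s ∈ S p k, f s = 0) :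
    span ℂ (Set.range fun e => f (orderedMonomial X e)) = ⊤ := by
  simp only [S, Set.mem_insert_iff, Set.mem_singleton_iff, forall_eq_or_imp, forall_eq,
    map_add, map_mul, map_smul] at hf
  obtain ⟨r10, r20, r21, r00, r11, r22⟩ := hf
  have hmon : (fun e => f (orderedMonomial X e)) =
      orderedMonomial ![f (X 0), f (X 1), f (X 2)] := by
    ext e; simp [orderedMonomial]
  refine FreeAlgebra.eq_top_of_one_mem_of_mul_mem f hf_surj _
    (subset_span ⟨0, by simp [orderedMonomial]⟩) fun i w hw => ?_
  have hi : f (X i) = f (X 0) ∨ f (X i) = f (X 1) ∨ f (X i) = f (X 2) := by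
    fin_cases i <;> simp
  rw [hmon] at hw ⊢
  induction hw using span_induction with
  | mem w hw =>
    obtain ⟨e, rfl⟩ := hw
    exact mul_orderedMonomial_mem_span r10 r20 r21 r00 r11 r22 hi e
  | zero => simp
  | add u v _ _ hu hv => simpa [mul_add] using add_mem hu hv
  | smul c u _ hu => simpa [mul_smul_comm] using smul_mem _ c hu

/-- Left multiplication by `x₁`, `x₂`, `x₃` on `F/I`, in the coordinates of the basis
`x₁^a x₂^b x₃^c` indexed by `(a, b, c)`. -/
noncomputable def lmulX₁ : Module.End ℂ (Fin 2 × Fin 2 × Fin 2 → ℂ) :=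
  LinearMap.pi fun x => if x.1 = 1 then LinearMap.proj (0, x.2) else 0

noncomputable def lmulX₂ : Module.End ℂ (Fin 2 × Fin 2 × Fin 2 → ℂ) :=
  LinearMap.pi fun x => if x.2.1 = 1 then (-1) ^ (x.1 : ℕ) • LinearMap.proj (x.1, 0, x.2.2) else 0

noncomputable def lmulX₃ (p k : ℂ) : Module.End ℂ (Fin 2 × Fin 2 × Fin 2 → ℂ) :=
  LinearMap.pi fun x =>
    if x = (0, 0, 1) then LinearMap.proj (0, 0, 0)
    else if x = (1, 0, 1) then -LinearMap.proj (1, 0, 0) - p • LinearMap.proj (0, 0, 1)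
    else if x = (0, 1, 1) then -LinearMap.proj (0, 1, 0)
    else if x = (1, 1, 0) then -p • LinearMap.proj (0, 1, 0) - k • LinearMap.proj (0, 0, 1)
    else if x = (1, 1, 1) then LinearMap.proj (1, 1, 0) - (2 * p) • LinearMap.proj (0, 1, 1)
    else 0

noncomputable def regularRep (p k : ℂ) : F →ₐ[ℂ] Module.End ℂ (Fin 2 × Fin 2 × Fin 2 → ℂ) :=
  FreeAlgebra.lift ℂ ![lmulX₁, lmulX₂, lmulX₃ p k]

lemma regularRep_eq_zero_of_mem_S (p k : ℂ) : ∀ s ∈ S p k, regularRep p k s = 0 := by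
  simp only [S, Set.mem_insert_iff, Set.mem_singleton_iff, forall_eq_or_imp, forall_eq,
    map_add, map_mul, map_smul, regularRep, X, FreeAlgebra.lift_ι_apply]
  refine ⟨?_, ?_, ?_, ?_, ?_, ?_⟩ <;> ext v ⟨a, b, c⟩ <;>
    fin_cases a <;> fin_cases b <;> fin_cases c <;>
    simp [lmulX₁, lmulX₂, lmulX₃, Module.End.mul_apply] <;> ring

lemma regularRep_orderedMonomial_single (p k : ℂ) (e : Fin 2 × Fin 2 × Fin 2) :
    regularRep p k (orderedMonomial X e) (Pi.single 0 1) = Pi.single e 1 := by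
  obtain ⟨a, b, c⟩ := e
  simp only [orderedMonomial, map_mul, map_pow, regularRep, X, FreeAlgebra.lift_ι_apply]
  fin_cases a <;> fin_cases b <;> fin_cases c <;>
    ext ⟨a', b', c'⟩ <;> fin_cases a' <;> fin_cases b' <;> fin_cases c' <;>
    simp [lmulX₁, lmulX₂, lmulX₃, Module.End.mul_apply, Pi.single_apply]

lemma mkAlgHom_eq_zero_of_mem_S (p k : ℂ) :
    ∀ s ∈ S p k, RingQuot.mkAlgHom ℂ (rel p k) s = 0 := fun s hs => by
  simpa using RingQuot.mkAlgHom_rel ℂ (show rel p k s 0 from ⟨hs, rfl⟩)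

lemma linearIndependent_orderedMonomial (p k : ℂ) :
    LinearIndependent ℂ fun e => RingQuot.mkAlgHom ℂ (rel p k) (orderedMonomial X e) := by
  let ρ : RingQuot (rel p k) →ₐ[ℂ] Module.End ℂ (Fin 2 × Fin 2 × Fin 2 → ℂ) :=
    RingQuot.liftAlgHom ℂ
      ⟨regularRep p k, by rintro s _ ⟨hs, rfl⟩; simp [regularRep_eq_zero_of_mem_S p k s hs]⟩
  refine .of_comp (LinearMap.applyₗ (Pi.single 0 1) ∘ₗ ρ.toLinearMap) ?_
  convert (Pi.basisFun ℂ (Fin 2 × Fin 2 × Fin 2)).linearIndependent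
  ext1 e
  simp [ρ, regularRep_orderedMonomial_single]

/-- `F/I` has `ℂ`-dimension 8 and the images of the eight monomials `x₁^{e₁} x₂^{e₂} x₃^{e₃}`, `eᵢ ∈ {0,1}`, form a `ℂ`-basis. -/
theorem dim_eight_R12_t_neg_one (p k : ℂ) :
    Module.finrank ℂ (RingQuot (rel p k)) = 8 ∧
    LinearIndependent ℂ (fun e : Fin 2 × Fin 2 × Fin 2 =>
      RingQuot.mkAlgHom ℂ (rel p k) (X 0 ^ (e.1 : ℕ) * X 1 ^ (e.2.1 : ℕ) * X 2 ^ (e.2.2 : ℕ))) ∧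
    Submodule.span ℂ (Set.range (fun e : Fin 2 × Fin 2 × Fin 2 =>
      RingQuot.mkAlgHom ℂ (rel p k) (X 0 ^ (e.1 : ℕ) * X 1 ^ (e.2.1 : ℕ) * X 2 ^ (e.2.2 : ℕ)))) = ⊤ := by
  have hli := linearIndependent_orderedMonomial p k
  have hspan := span_orderedMonomial_eq_top _ (RingQuot.mkAlgHom_surjective ℂ (rel p k))
    (mkAlgHom_eq_zero_of_mem_S p k)
  refine ⟨?_, hli, hspan⟩
  rw [Module.finrank_eq_card_basis (Module.Basis.mk hli hspan.ge)]
  rfl
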